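/- arXiv:2311.03267 — 3 statements merged into one kernel-verified Lean document; each statement's English description precedes it below -/
import Mathlib

section
/- If Δ ≥ 100·ln(n)/ε⁴, then with probability at least 1 − 1/n^{32}, every vertex u ∈ V satisfies |{e ∈ N(u) : X_e = T+1}| < ε(1 + ε)·Δ. -/
/-!
Fix a vertex `u`. The number of capped edges at `u` is a sum of `deg u ≤ Δ` independent
indicators, each with mean `p = (1 - ε) ^ T ≤ ε`: since `T > ln (1/ε) / ε - 1` and
`ln (1 - ε) ≤ -ε - ε² / 2`, we get `T ln (1 - ε) ≤ -ln (1/ε)` as soon as `ln (1/ε) ≥ 2 + ε`.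
So the count has mean at most `εΔ`, and reaching `ε(1 + ε)Δ` is an upward deviation of at least
`ε²Δ`, which by Hoeffding's inequality has probability at most `exp (-2 ε⁴ Δ) ≤ n ^ (-33)`.
A union bound over the `n` vertices finishes the proof.
-/

open MeasureTheory ProbabilityTheory Finset Real

theorem Real.log_one_sub_le_neg_sub_sq_div_two {x : ℝ} (h0 : 0 ≤ x) (h1 : x < 1) :
    log (1 - x) ≤ -x - x ^ 2 / 2 := by
  have hsum := hasSum_pow_div_log_of_abs_lt_one (by rwa [abs_of_nonneg h0])
  have := sum_le_hasSum (range 2) (fun i _ ↦ by positivity) hsum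
  norm_num [Finset.sum_range_succ] at this
  linarith

theorem two_add_le_log_one_div {ε : ℝ} (hε0 : 0 < ε) (hε1 : ε ≤ 1 / 10) : 2 + ε ≤ log (1 / ε) := by
  have hlog10 : log 10 = 3 * log 2 + log (5 / 4) := by
    rw [← log_rpow (by norm_num), ← log_mul (by norm_num) (by norm_num)]; norm_num
  have h54 := one_sub_inv_le_log_of_pos (show (0 : ℝ) < 5 / 4 by norm_num)
  have hmono : log 10 ≤ log (1 / ε) := log_le_log (by norm_num) (by rw [le_div_iff₀ hε0]; linarith)
  linarith [log_two_gt_d9]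

theorem one_sub_pow_floor_le {ε : ℝ} (hε0 : 0 < ε) (hε1 : ε ≤ 1 / 10) :
    (1 - ε) ^ ⌊(1 / ε) * log (1 / ε)⌋₊ ≤ ε := by
  set L := log (1 / ε) with hL_def
  set T := ⌊(1 / ε) * L⌋₊
  have hL := two_add_le_log_one_div hε0 hε1
  have hT : (1 / ε) * L - 1 < T := Nat.sub_one_lt_floor _
  have hlog := Real.log_one_sub_le_neg_sub_sq_div_two hε0.le (by linarith)
  have hexp : T * log (1 - ε) ≤ -L := calc
    T * log (1 - ε) ≤ T * (-ε - ε ^ 2 / 2) := by gcongr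
    _ ≤ ((1 / ε) * L - 1) * (-ε - ε ^ 2 / 2) := mul_le_mul_of_nonpos_right hT.le (by nlinarith)
    _ = -L + ε * (1 + ε / 2 - L / 2) := by field_simp; ring
    _ ≤ -L := by nlinarith
  calc (1 - ε) ^ T = exp (T * log (1 - ε)) := by rw [exp_nat_mul, exp_log (by linarith)]
    _ ≤ exp (-L) := exp_le_exp.2 hexp
    _ = ε := by rw [hL_def, one_div, log_inv, neg_neg, exp_log hε0]

theorem measureReal_card_filter_mem_ge_le {Ω ι β : Type*} [MeasurableSpace Ω] {μ : Measure Ω}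
    [IsProbabilityMeasure μ] [MeasurableSpace β] {Y : ι → Ω → β} (hY : ∀ i, Measurable (Y i))
    (hindep : iIndepFun Y μ) {B : Set β} [DecidablePred (· ∈ B)] (hB : MeasurableSet B)
    (s : Finset ι) {p τ d : ℝ} (hp : ∀ i ∈ s, μ.real (Y i ⁻¹' B) ≤ p) (hτ : 0 ≤ τ)
    (hd : (#s : ℝ) ≤ d) :
    μ.real {ω | #s * p + τ ≤ #{i ∈ s | Y i ω ∈ B}} ≤ exp (-2 * τ ^ 2 / d) := by
  rcases hτ.eq_or_lt with rfl | hτ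
  · simp [measureReal_le_one]
  rcases s.eq_empty_or_nonempty with rfl | hs
  · simp [hτ.not_ge, (exp_pos _).le]
  set Z : ι → Ω → ℝ := fun i ω ↦ B.indicator 1 (Y i ω)
  have hZ : ∀ i, Measurable (Z i) := fun i ↦ (measurable_one.indicator hB).comp (hY i)
  have hZ_int : ∀ i, μ[Z i] = μ.real (Y i ⁻¹' B) := fun i ↦ by
    have : Z i = (Y i ⁻¹' B).indicator 1 := funext fun ω ↦ (Set.indicator_comp_right (Y i)).symm
    rw [this, integral_indicator_one (hY i hB)]
  have hcount : ∀ ω, (#{i ∈ s | Y i ω ∈ B} : ℝ) = ∑ i ∈ s, Z i ω := fun ω ↦ by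
    simp [Z, Set.indicator_apply]
  have hsubG : ∀ i ∈ s, HasSubgaussianMGF (fun ω ↦ Z i ω - μ[Z i]) ((‖(1 : ℝ) - 0‖₊ / 2) ^ 2) μ :=
    fun i _ ↦ hasSubgaussianMGF_of_mem_Icc (hZ i).aemeasurable (ae_of_all _ fun ω ↦ by
      by_cases h : Y i ω ∈ B <;> simp [Z, h])
  have hindepZ : iIndepFun (fun i ω ↦ Z i ω - μ[Z i]) μ :=
    hindep.comp (fun i b ↦ B.indicator 1 b - ∫ ω, Z i ω ∂μ)
      fun i ↦ (measurable_one.indicator hB).sub_const _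
  have hmean : ∑ i ∈ s, μ[Z i] ≤ #s * p := by
    simpa [hZ_int] using Finset.sum_le_card_nsmul s _ p fun i hi ↦ (hZ_int i).trans_le (hp i hi)
  have hs_pos : (0 : ℝ) < #s := by exact_mod_cast hs.card_pos
  calc μ.real {ω | #s * p + τ ≤ #{i ∈ s | Y i ω ∈ B}}
      ≤ μ.real {ω | τ ≤ ∑ i ∈ s, (Z i ω - μ[Z i])} := by
        refine measureReal_mono (fun ω hω ↦ ?_)
        simp only [Set.mem_ofPred_eq, hcount, Finset.sum_sub_distrib] at hω ⊢
        linarith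
    _ ≤ exp (-2 * τ ^ 2 / #s) :=
        (HasSubgaussianMGF.measure_sum_ge_le_of_iIndepFun hindepZ hsubG hτ.le).trans_eq <| by
          simp only [sub_zero, nnnorm_one, one_div, inv_pow, sum_const, nsmul_eq_mul,
            NNReal.coe_mul, NNReal.coe_natCast, NNReal.coe_inv, NNReal.coe_pow, NNReal.coe_ofNat,
            neg_mul, exp_eq_exp]
          field_simp
    _ ≤ exp (-2 * τ ^ 2 / d) := by
        rw [exp_le_exp, neg_mul, neg_div, neg_div, neg_le_neg_iff]
        gcongr

namespace SimpleGraph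

variable {V : Type*} (G : SimpleGraph V)

theorem card_subtype_incidenceFinset [DecidableEq V] [DecidableRel G.Adj] (u : V)
    [Fintype (G.neighborSet u)] :
    #((G.incidenceFinset u).subtype (· ∈ G.edgeSet)) = G.degree u := by
  rw [Finset.card_subtype, Finset.filter_true_of_mem, card_incidenceFinset_eq_degree]
  exact fun e he ↦ G.incidenceSet_subset u ((mem_incidenceFinset G u e).1 he)

theorem ncard_incidenceSet_inter [DecidableEq V] [DecidableRel G.Adj] (u : V)
    [Fintype (G.neighborSet u)] (P : Sym2 V → Prop) [DecidablePred P] :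
    {e | e ∈ G.incidenceSet u ∧ P e}.ncard =
      #(((G.incidenceFinset u).subtype (· ∈ G.edgeSet)).filter fun e : G.edgeSet ↦ P e) := by
  rw [← Set.ncard_coe_finset, ← Set.ncard_image_of_injective _ Subtype.val_injective]
  congr 1
  ext e
  simpa [mem_incidenceFinset] using fun he _ ↦ G.incidenceSet_subset u he

theorem measureReal_degree_mul_add_le_ncard_le {Ω β : Type*} [MeasurableSpace Ω]
    {μ : Measure Ω} [IsProbabilityMeasure μ] [MeasurableSpace β] {X : Sym2 V → Ω → β}
    (hX : ∀ e, Measurable (X e)) (hindep : iIndepFun (fun e : G.edgeSet ↦ X e) μ)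
    {B : Set β} (hB : MeasurableSet B) (u : V) [Fintype (G.neighborSet u)] {p τ d : ℝ}
    (hp : ∀ e ∈ G.edgeSet, μ.real (X e ⁻¹' B) ≤ p) (hτ : 0 ≤ τ) (hd : (G.degree u : ℝ) ≤ d) :
    μ.real {ω | G.degree u * p + τ ≤ {e | e ∈ G.incidenceSet u ∧ X e ω ∈ B}.ncard} ≤
      exp (-2 * τ ^ 2 / d) := by
  classical
  simp_rw [G.ncard_incidenceSet_inter, ← G.card_subtype_incidenceFinset] at hd ⊢
  exact measureReal_card_filter_mem_ge_le (Y := fun e : G.edgeSet ↦ X e) (fun e ↦ hX e) hindep hB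
    _ (fun e _ ↦ hp e e.2) hτ hd

end SimpleGraph

theorem ofReal_one_sub_card_mul_le_measure_forall {Ω ι : Type*} [MeasurableSpace Ω]
    {μ : Measure Ω} [IsProbabilityMeasure μ] [Fintype ι] {P : ι → Ω → Prop} {q : ℝ}
    (hq₀ : 0 ≤ q) (hq : ∀ i, μ {ω | ¬ P i ω} ≤ ENNReal.ofReal q) :
    ENNReal.ofReal (1 - Fintype.card ι * q) ≤ μ {ω | ∀ i, P i ω} := by
  have hcompl : {ω | ∀ i, P i ω} = (⋃ i, {ω | ¬ P i ω})ᶜ := by ext; simp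
  have hunion : μ (⋃ i, {ω | ¬ P i ω}) ≤ ENNReal.ofReal (Fintype.card ι * q) := calc
    μ (⋃ i, {ω | ¬ P i ω}) ≤ ∑ i, μ {ω | ¬ P i ω} := measure_iUnion_fintype_le μ _
    _ ≤ ∑ _i : ι, ENNReal.ofReal q := Finset.sum_le_sum fun i _ ↦ hq i
    _ = ENNReal.ofReal (Fintype.card ι * q) := by
      rw [Finset.sum_const, Finset.card_univ, nsmul_eq_mul, ENNReal.ofReal_mul (by positivity),
        ENNReal.ofReal_natCast]
  rw [ENNReal.ofReal_sub _ (by positivity), ENNReal.ofReal_one, hcompl, tsub_le_iff_right]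
  calc 1 = μ Set.univ := measure_univ.symm
    _ ≤ μ (⋃ i, {ω | ¬ P i ω})ᶜ + μ (⋃ i, {ω | ¬ P i ω}) := by
      rw [add_comm]; exact measure_univ_le_add_compl _
    _ ≤ _ := by gcongr

theorem exp_neg_two_mul_sq_div_le_inv_pow {ε Δ : ℝ} {n : ℕ} (hε : 0 < ε)
    (hn : 1 ≤ n) (hΔ : 100 * log n / ε ^ 4 ≤ Δ) :
    exp (-2 * (ε ^ 2 * Δ) ^ 2 / Δ) ≤ 1 / (n : ℝ) ^ 33 := by
  have hlog : 0 ≤ log n := log_nonneg (by exact_mod_cast hn)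
  have hΔε : 100 * log n ≤ ε ^ 4 * Δ := by rwa [div_le_iff₀' (by positivity)] at hΔ
  have hexp : -2 * (ε ^ 2 * Δ) ^ 2 / Δ ≤ -(33 * log n) := by
    rcases eq_or_ne Δ 0 with rfl | hΔ0
    · simp only [mul_zero, div_zero]
      linarith
    · rw [show -2 * (ε ^ 2 * Δ) ^ 2 / Δ = -2 * (ε ^ 4 * Δ) by field_simp]
      linarith
  calc exp (-2 * (ε ^ 2 * Δ) ^ 2 / Δ) ≤ exp (-(33 * log n)) := exp_le_exp.2 hexp
    _ = 1 / (n : ℝ) ^ 33 := by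
      rw [exp_neg, show (33 : ℝ) = (33 : ℕ) by norm_num, exp_nat_mul,
        exp_log (by positivity), one_div]

theorem stmt_11_general {V : Type*} [Fintype V]
    (G : SimpleGraph V) [DecidableRel G.Adj]
    {Ω : Type*} [MeasurableSpace Ω] (μ : Measure Ω) [IsProbabilityMeasure μ]
    (ε Δ : ℝ) (hε0 : 0 < ε) (hε1 : ε ≤ 1 / 10)
    (T : ℕ) (hT : T = ⌊(1 / ε) * Real.log (1 / ε)⌋₊)
    (n : ℕ) (hn : n = Fintype.card V)
    (hdeg : ∀ u : V, (G.degree u : ℝ) ≤ Δ)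
    (hΔ : Δ ≥ 100 * Real.log n / ε ^ 4)
    (X : Sym2 V → Ω → ℕ)
    (hmeas : ∀ e, Measurable (X e))
    (hindep : iIndepFun
      (fun e : G.edgeSet => X e) μ)
    (hdistT : ∀ e ∈ G.edgeSet, μ {ω | X e ω = T + 1} = ENNReal.ofReal ((1 - ε) ^ T)) :
    ENNReal.ofReal (1 - 1 / (n : ℝ) ^ 32) ≤
      μ {ω | ∀ u : V,
        (({e | e ∈ G.incidenceSet u ∧ X e ω = T + 1}.ncard : ℝ)) < ε * (1 + ε) * Δ} := by
  have hpε : (1 - ε) ^ T ≤ ε := hT ▸ one_sub_pow_floor_le hε0 hε1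
  have hp0 : 0 ≤ (1 - ε) ^ T := pow_nonneg (by linarith) _
  have hvertex : ∀ u, μ {ω | ¬ ({e | e ∈ G.incidenceSet u ∧ X e ω = T + 1}.ncard : ℝ) <
      ε * (1 + ε) * Δ} ≤ ENNReal.ofReal (1 / (n : ℝ) ^ 33) := fun u ↦ by
    have hn1 : 1 ≤ n := hn ▸ Fintype.card_pos_iff.2 ⟨u⟩
    have hΔ0 : 0 ≤ Δ := (Nat.cast_nonneg _).trans (hdeg u)
    have hmean : (G.degree u : ℝ) * (1 - ε) ^ T ≤ Δ * ε := mul_le_mul (hdeg u) hpε hp0 hΔ0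
    have hbound := G.measureReal_degree_mul_add_le_ncard_le hmeas hindep
      (measurableSet_singleton (T + 1)) u (p := (1 - ε) ^ T) (τ := ε ^ 2 * Δ)
      (fun e he ↦ by simp [measureReal_def, Set.preimage, hdistT e he, hp0]) (by positivity)
      (hdeg u)
    rw [← ENNReal.ofReal_toReal (measure_ne_top μ _)]
    refine ENNReal.ofReal_le_ofReal (le_trans ?_ (hbound.trans
      (exp_neg_two_mul_sq_div_le_inv_pow hε0 hn1 hΔ)))
    refine measureReal_mono fun ω hω ↦ ?_
    simp only [Set.mem_ofPred_eq, not_lt, Set.mem_singleton_iff] at hω ⊢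
    linarith
  calc ENNReal.ofReal (1 - 1 / (n : ℝ) ^ 32)
      = ENNReal.ofReal (1 - Fintype.card V * (1 / (n : ℝ) ^ 33)) := by
        rw [← hn]
        rcases eq_or_ne n 0 with rfl | hn0
        · simp
        · field_simp
    _ ≤ _ := ofReal_one_sub_card_mul_le_measure_forall (by positivity) hvertex

/-- Let `G` be a finite simple graph on `n` vertices with maximum degree at most `Δ`,
`0 < ε ≤ 1/10`, `T := ⌊(1/ε)·ln(1/ε)⌋`, and let `(X_e)_{e ∈ E}` be independent random
rounds, each with the capped geometric distribution on `{1, …, T+1}`.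
If `Δ ≥ 100·ln(n)/ε⁴`, then with probability at least `1 − 1/n^{32}`, every vertex `u`
satisfies `|{e ∈ N(u) : X_e = T+1}| < ε(1 + ε)·Δ`. -/
theorem stmt_11 {V : Type*} [Fintype V] [DecidableEq V]
    (G : SimpleGraph V) [DecidableRel G.Adj]
    {Ω : Type*} [MeasurableSpace Ω] (μ : Measure Ω) [IsProbabilityMeasure μ]
    (ε Δ : ℝ) (hε0 : 0 < ε) (hε1 : ε ≤ 1 / 10)
    (T : ℕ) (hT : T = ⌊(1 / ε) * Real.log (1 / ε)⌋₊)
    (n : ℕ) (hn : n = Fintype.card V)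
    (hdeg : ∀ u : V, (G.degree u : ℝ) ≤ Δ)
    (hΔ : Δ ≥ 100 * Real.log n / ε ^ 4)
    (X : Sym2 V → Ω → ℕ)
    (hmeas : ∀ e, Measurable (X e))
    (hindep : iIndepFun
      (fun e : G.edgeSet => X e) μ)
    (hdist : ∀ e ∈ G.edgeSet, ∀ i : ℕ, 1 ≤ i → i ≤ T →
      μ {ω | X e ω = i} = ENNReal.ofReal (ε * (1 - ε) ^ (i - 1)))
    (hdistT : ∀ e ∈ G.edgeSet, μ {ω | X e ω = T + 1} = ENNReal.ofReal ((1 - ε) ^ T)) :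
    ENNReal.ofReal (1 - 1 / (n : ℝ) ^ 32) ≤
      μ {ω | ∀ u : V,
        (({e | e ∈ G.incidenceSet u ∧ X e ω = T + 1}.ncard : ℝ)) < ε * (1 + ε) * Δ} :=
  stmt_11_general G μ ε Δ hε0 hε1 T hT n hn hdeg hΔ X hmeas hindep hdistT
end

section
/- With probability at least 1 − 1/n^{31}, every j ∈ {1, …, η} satisfies Δ(G_j) ≤ Δ' + 10·√(Δ'·ln n), where Δ(G_j) denotes the maximum degree of G_j. -/
/-!
For a fixed colour `j` and vertex `u`, the `j`-degree of `u` counts the successes among `deg u`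
independent trials of probability `1/η`, so its mean is at most `Δ/η ≤ Δ'`. The Chernoff bound
`P(X ≥ a) ≤ exp(m (eᵗ - 1) - t a)`, taken at `t = 6 √(Δ' ln n) / Δ'`, bounds the probability that
it exceeds `Δ' + 10 √(Δ' ln n)` by `n⁻³³`, and a union bound over the `η ≤ n` colours and the
`n` vertices costs a factor `n²`.
-/

open MeasureTheory ProbabilityTheory Real Finset

lemma exp_mul_indicator_one {Ω : Type*} (s : Set Ω) (t : ℝ) (ω : Ω) :
    exp (t * s.indicator 1 ω) = s.indicator (fun _ ↦ exp t - 1) ω + 1 := by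
  by_cases h : ω ∈ s <;> simp [h]

lemma Set.ncard_setOf_mem_and {α : Type*} {s : Set α} [Fintype s] (P : α → Prop)
    [DecidablePred P] : {x | x ∈ s ∧ P x}.ncard = #{x : s | P x} := by
  rw [← Nat.card_coe_set_eq, ← Fintype.card_subtype, ← Nat.card_eq_fintype_card]
  exact Nat.card_congr (Equiv.subtypeSubtypeEquivSubtypeInter (· ∈ s) P).symm

lemma div_natCeil_div_le {a b : ℝ} (hb : 0 < b) : a / ⌈a / b⌉₊ ≤ b := by
  rcases eq_or_ne ⌈a / b⌉₊ 0 with h | h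
  · simp [h, hb.le]
  · exact div_le_of_le_mul₀ (Nat.cast_nonneg _) hb.le
      ((div_le_iff₀' hb).1 (Nat.le_ceil _))

lemma exp_le_one_add_add_sq {t : ℝ} (h0 : 0 ≤ t) (h1 : t ≤ 3 / 5) :
    exp t ≤ 1 + t + 3 / 4 * t ^ 2 := by
  have h := Real.exp_bound' h0 (h1.trans (by norm_num)) (n := 3) (by norm_num)
  simp only [sum_range_succ, sum_range_zero, Nat.factorial] at h
  norm_num at h
  nlinarith [mul_le_mul_of_nonneg_right h1 (sq_nonneg t)]

/-- With `s = 10 √(D L)` and `t = 3s / (5D)`, the bound `eᵗ ≤ 1 + t + 3t²/4` leaves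
`t (3Dt/4 - s) = -(33/100) s² / D = -33 L`. -/
lemma exists_chernoff_exponent_le {D L : ℝ} (hD : 0 < D) (hL : 0 ≤ L) (hDL : 100 * L ≤ D) :
    ∃ t, 0 ≤ t ∧ D * (exp t - 1) - t * (D + 10 * √(D * L)) ≤ -(33 * L) := by
  set s := 10 * √(D * L)
  have hs2 : s ^ 2 = 100 * (D * L) := by
    rw [mul_pow, sq_sqrt (by positivity)]; norm_num
  have hs : 0 ≤ s := by positivity
  have hsD : s ≤ D := by nlinarith
  refine ⟨3 / 5 * s / D, by positivity, ?_⟩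
  have htD : 3 / 5 * s / D * D = 3 / 5 * s := div_mul_cancel₀ _ hD.ne'
  have hexp := exp_le_one_add_add_sq (t := 3 / 5 * s / D) (by positivity)
    (by rw [div_le_iff₀ hD]; nlinarith)
  have hmul := mul_le_mul_of_nonneg_left hexp (sq_nonneg D)
  refine le_of_mul_le_mul_right ?_ hD
  nlinarith

section Probability

variable {Ω : Type*} [MeasurableSpace Ω] {μ : Measure Ω}

lemma integrable_exp_mul_indicator_one [IsFiniteMeasure μ] {s : Set Ω} (hs : MeasurableSet s)
    (t : ℝ) : Integrable (fun ω ↦ exp (t * s.indicator 1 ω)) μ := by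
  simp_rw [exp_mul_indicator_one]
  exact ((integrable_const _).indicator hs).add (integrable_const 1)

lemma mgf_indicator_one [IsProbabilityMeasure μ] {s : Set Ω} (hs : MeasurableSet s) (t : ℝ) :
    mgf (s.indicator 1) μ t = 1 + μ.real s * (exp t - 1) := by
  rw [mgf]
  simp_rw [exp_mul_indicator_one]
  rw [integral_add ((integrable_const _).indicator hs) (integrable_const 1),
    integral_indicator_const _ hs, integral_const, probReal_univ, smul_eq_mul, smul_eq_mul]
  ring

lemma mgf_indicator_one_le_exp [IsProbabilityMeasure μ] {s : Set Ω} (hs : MeasurableSet s)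
    (t : ℝ) :
    mgf (s.indicator 1) μ t ≤ exp (μ.real s * (exp t - 1)) := by
  rw [mgf_indicator_one hs, add_comm]
  exact add_one_le_exp _

theorem measureReal_le_card_filter_le_exp {ι β : Type*} [Fintype ι] [MeasurableSpace β]
    {X : ι → Ω → β} (hX : ∀ i, Measurable (X i)) (hindep : iIndepFun X μ)
    {B : Set β} [DecidablePred (· ∈ B)] (hB : MeasurableSet B) {m : ℝ}
    (hm : ∑ i, μ.real (X i ⁻¹' B) ≤ m) {t : ℝ} (ht : 0 ≤ t) (a : ℝ) :
    μ.real {ω | a ≤ #{i | X i ω ∈ B}} ≤ exp (m * (exp t - 1) - t * a) := by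
  have := hindep.isProbabilityMeasure
  set Y : ι → Ω → ℝ := fun i ↦ (X i ⁻¹' B).indicator 1
  have hYmeas : ∀ i, Measurable (Y i) := fun i ↦ measurable_one.indicator (hX i hB)
  have hYindep : iIndepFun Y μ := by
    convert hindep.comp (fun _ ↦ B.indicator (1 : β → ℝ))
      (fun _ ↦ measurable_one.indicator hB) using 1
    ext i ω
    by_cases h : X i ω ∈ B <;> simp [Y, h]
  have hcount : ∀ ω, (#{i | X i ω ∈ B} : ℝ) = (∑ i, Y i) ω := by
    intro ω
    rw [Finset.sum_apply, card_filter, Nat.cast_sum]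
    refine sum_congr rfl fun i _ ↦ ?_
    by_cases h : X i ω ∈ B <;> simp [Y, h]
  have hmgf : mgf (∑ i, Y i) μ t ≤ exp (m * (exp t - 1)) := calc
    mgf (∑ i, Y i) μ t = ∏ i, mgf (Y i) μ t := hYindep.mgf_sum hYmeas _
    _ ≤ ∏ i, exp (μ.real (X i ⁻¹' B) * (exp t - 1)) :=
      prod_le_prod (fun _ _ ↦ mgf_nonneg) fun i _ ↦ mgf_indicator_one_le_exp (hX i hB) t
    _ = exp ((∑ i, μ.real (X i ⁻¹' B)) * (exp t - 1)) := by rw [← exp_sum, sum_mul]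
    _ ≤ exp (m * (exp t - 1)) := by
      gcongr
      linarith [add_one_le_exp t]
  calc μ.real {ω | a ≤ #{i | X i ω ∈ B}} = μ.real {ω | a ≤ (∑ i, Y i) ω} := by
        simp_rw [hcount]
    _ ≤ exp (-t * a) * mgf (∑ i, Y i) μ t :=
      measure_ge_le_exp_mul_mgf a ht (hYindep.integrable_exp_mul_sum hYmeas
        fun i _ ↦ integrable_exp_mul_indicator_one (hX i hB) t)
    _ ≤ exp (-t * a) * exp (m * (exp t - 1)) := by gcongr
    _ = exp (m * (exp t - 1) - t * a) := by rw [← exp_add]; ring_nf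

lemma one_sub_card_mul_le_measureReal_setOf_forall [IsProbabilityMeasure μ] {ι : Type*}
    (s : Finset ι) {P : ι → Ω → Prop} {ε : ℝ} (h : ∀ i ∈ s, μ.real {ω | ¬ P i ω} ≤ ε) :
    1 - #s * ε ≤ μ.real {ω | ∀ i ∈ s, P i ω} := by
  have hcompl : {ω | ∀ i ∈ s, P i ω}ᶜ = ⋃ i ∈ s, {ω | ¬ P i ω} := by ext; simp
  have hunion := measureReal_union_le (μ := μ) {ω | ∀ i ∈ s, P i ω} {ω | ∀ i ∈ s, P i ω}ᶜ
  rw [Set.union_compl_self, probReal_univ, hcompl] at hunion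
  have := (measureReal_biUnion_finset_le s _).trans (sum_le_card_nsmul s _ ε h)
  rw [nsmul_eq_mul] at this
  linarith

theorem SimpleGraph.measureReal_lt_ncard_incidenceSet_le {V : Type*} [Fintype V]
    [DecidableEq V] (G : SimpleGraph V) [DecidableRel G.Adj] {X : Sym2 V → Ω → ℕ}
    (hX : ∀ e, Measurable (X e)) (hindep : iIndepFun (fun e : G.edgeSet ↦ X e) μ) (j : ℕ)
    {p : ℝ} (hp : ∀ e ∈ G.edgeSet, μ.real {ω | X e ω = j} ≤ p) (u : V) {D L : ℝ}
    (hD : 0 < D) (hL : 0 ≤ L) (hDL : 100 * L ≤ D) (hmean : G.degree u * p ≤ D) :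
    μ.real {ω | D + 10 * √(D * L) < {e | e ∈ G.incidenceSet u ∧ X e ω = j}.ncard} ≤
      exp (-(33 * L)) := by
  obtain ⟨t, ht, hexponent⟩ := exists_chernoff_exponent_le hD hL hDL
  have hindep' : iIndepFun (fun e : G.incidenceSet u ↦ X e) μ :=
    hindep.precomp (Set.inclusion_injective (G.incidenceSet_subset u))
  have hsum : ∑ e : G.incidenceSet u, μ.real (X e ⁻¹' {j}) ≤ D := calc
    _ ≤ ∑ _e : G.incidenceSet u, p := sum_le_sum fun e _ ↦ hp e (G.incidenceSet_subset u e.2)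
    _ ≤ D := by rwa [sum_const, card_univ, G.card_incidenceSet_eq_degree, nsmul_eq_mul]
  have hchernoff := measureReal_le_card_filter_le_exp (X := fun e : G.incidenceSet u ↦ X e)
    (fun e ↦ hX e) hindep' (measurableSet_singleton j) hsum ht (D + 10 * √(D * L))
  have := hindep.isProbabilityMeasure
  calc _ ≤ μ.real {ω | D + 10 * √(D * L) ≤ #{e : G.incidenceSet u | X e ω = j}} :=
        measureReal_mono fun ω hω ↦ by
          rw [Set.mem_ofPred_eq, Set.ncard_setOf_mem_and] at hω; exact hω.le
    _ ≤ exp (D * (exp t - 1) - t * (D + 10 * √(D * L))) := by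
        simpa only [Set.mem_singleton_iff] using hchernoff
    _ ≤ exp (-(33 * L)) := exp_le_exp.2 hexponent

end Probability

theorem stmt_12_general {V : Type*} [Fintype V] [DecidableEq V]
    (G : SimpleGraph V) [DecidableRel G.Adj]
    {Ω : Type*} [MeasurableSpace Ω] (μ : Measure Ω) [IsProbabilityMeasure μ]
    (Δ Δ' : ℝ) (n : ℕ) (hn : n = Fintype.card V) (hn3 : 3 ≤ n)
    (hdeg : ∀ u : V, (G.degree u : ℝ) ≤ Δ)
    (hΔ'1 : 100 * Real.log n ≤ Δ') (hΔn : Δ ≤ (n : ℝ))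
    (η : ℕ) (hη : η = ⌈Δ / Δ'⌉₊)
    (J : Sym2 V → Ω → ℕ)
    (hmeas : ∀ e, Measurable (J e))
    (hindep : iIndepFun
      (fun e : G.edgeSet => J e) μ)
    (hdist : ∀ e ∈ G.edgeSet, ∀ j ∈ Finset.Icc 1 η,
      μ {ω | J e ω = j} = (η : ENNReal)⁻¹) :
    ENNReal.ofReal (1 - 1 / (n : ℝ) ^ 31) ≤
      μ {ω | ∀ j ∈ Finset.Icc 1 η, ∀ u : V,
        (({e | e ∈ G.incidenceSet u ∧ J e ω = j}.ncard : ℝ)) ≤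
          Δ' + 10 * Real.sqrt (Δ' * Real.log n)} := by
  have hn1 : (1 : ℝ) < n := by exact_mod_cast (by omega : 1 < n)
  have hL : 0 < log n := log_pos hn1
  have hΔ' : 1 ≤ Δ' := by
    have : log 2 ≤ log n := log_le_log two_pos (by exact_mod_cast (by omega : 2 ≤ n))
    linarith [log_two_gt_d9]
  have hηn : (η : ℝ) ≤ n := by
    rw [hη]
    exact_mod_cast Nat.ceil_le.2 ((div_le_iff₀ (by linarith)).2 (by nlinarith))
  have hprob : ∀ j ∈ Icc 1 η, ∀ e ∈ G.edgeSet, μ.real {ω | J e ω = j} ≤ (η : ℝ)⁻¹ :=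
    fun j hj e he ↦ by simp [measureReal_def, hdist e he j hj]
  have hmean : ∀ u, G.degree u * (η : ℝ)⁻¹ ≤ Δ' := fun u ↦ by
    rw [← div_eq_mul_inv, hη]
    exact (div_le_div_of_nonneg_right (hdeg u) (Nat.cast_nonneg _)).trans
      (div_natCeil_div_le (by linarith))
  have hε : exp (-(33 * log n)) = 1 / (n : ℝ) ^ 33 := by
    rw [exp_neg, show 33 * log n = log ((n : ℝ) ^ 33) by rw [log_pow]; norm_num,
      exp_log (by positivity), one_div]
  have hunion := one_sub_card_mul_le_measureReal_setOf_forall (μ := μ) (Icc 1 η ×ˢ univ)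
    (P := fun p ω ↦ ({e | e ∈ G.incidenceSet p.2 ∧ J e ω = p.1}.ncard : ℝ) ≤
      Δ' + 10 * √(Δ' * log n)) fun p hp ↦
    (measureReal_mono fun ω hω ↦ not_le.1 hω).trans <|
      G.measureReal_lt_ncard_incidenceSet_le hmeas hindep p.1 (hprob p.1 (mem_product.1 hp).1)
        p.2 (by linarith) hL.le hΔ'1 (hmean p.2)
  rw [ENNReal.ofReal_le_iff_le_toReal (measure_ne_top _ _), ← measureReal_def]
  calc 1 - 1 / (n : ℝ) ^ 31 ≤ 1 - #(Icc 1 η ×ˢ (univ : Finset V)) * exp (-(33 * log n)) := by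
        rw [hε, card_product, card_univ, ← hn, Nat.card_Icc, Nat.add_sub_cancel, Nat.cast_mul]
        have : (η : ℝ) * n * (1 / n ^ 33) ≤ n * n * (1 / n ^ 33) := by gcongr
        have h31 : (n : ℝ) * n * (1 / n ^ 33) = 1 / n ^ 31 := by field_simp
        linarith
    _ ≤ _ := hunion
    _ = _ := by
      congr 1; ext ω
      exact ⟨fun h j hj u ↦ h (j, u) (mem_product.2 ⟨hj, mem_univ u⟩),
        fun h p hp ↦ h p.1 (mem_product.1 hp).1 p.2⟩

/-- Let `G` be a finite simple graph on `n ≥ 3` vertices with maximum degree at most `Δ`,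
`100·ln n ≤ Δ' ≤ Δ ≤ n`, `η := ⌈Δ/Δ'⌉`, and let `(J_e)_{e ∈ E}` be independent random
variables, each uniform on `{1, …, η}`; `G_j` is the spanning subgraph of `G` with edge set
`{e ∈ E : J_e = j}`. Then with probability at least `1 − 1/n^{31}`, every `j ∈ {1, …, η}`
satisfies `Δ(G_j) ≤ Δ' + 10·√(Δ'·ln n)`. -/
theorem stmt_12 {V : Type*} [Fintype V] [DecidableEq V]
    (G : SimpleGraph V) [DecidableRel G.Adj]
    {Ω : Type*} [MeasurableSpace Ω] (μ : Measure Ω) [IsProbabilityMeasure μ]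
    (Δ Δ' : ℝ) (n : ℕ) (hn : n = Fintype.card V) (hn3 : 3 ≤ n)
    (hdeg : ∀ u : V, (G.degree u : ℝ) ≤ Δ)
    (hΔ'1 : 100 * Real.log n ≤ Δ') (hΔ'2 : Δ' ≤ Δ) (hΔn : Δ ≤ (n : ℝ))
    (η : ℕ) (hη : η = ⌈Δ / Δ'⌉₊)
    (J : Sym2 V → Ω → ℕ)
    (hmeas : ∀ e, Measurable (J e))
    (hindep : iIndepFun
      (fun e : G.edgeSet => J e) μ)
    (hdist : ∀ e ∈ G.edgeSet, ∀ j ∈ Finset.Icc 1 η,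
      μ {ω | J e ω = j} = (η : ENNReal)⁻¹) :
    ENNReal.ofReal (1 - 1 / (n : ℝ) ^ 31) ≤
      μ {ω | ∀ j ∈ Finset.Icc 1 η, ∀ u : V,
        (({e | e ∈ G.incidenceSet u ∧ J e ω = j}.ncard : ℝ)) ≤
          Δ' + 10 * Real.sqrt (Δ' * Real.log n)} :=
  stmt_12_general G μ Δ Δ' n hn hn3 hdeg hΔ'1 hΔn η hη J hmeas hindep hdist
end

section
/- With probability at least 1 − 1/n^{31}, every j ∈ {1, …, η} satisfies Δ(G_j) ≤ (1 + ε)·Δ', where Δ(G_j) denotes the maximum degree of G_j. -/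
/-!
For a fixed colour `j` and vertex `u`, the degree of `u` in `G_j` counts which of the `deg u ≤ Δ`
independent events `J e = j` occur, each of probability `1/η`, so its mean is at most
`Δ/η ≤ Δ'`. The exponential moment bound at `t = 3ε/4` gives
`P(deg > (1 + ε)Δ') ≤ exp(Δ'(eᵗ - 1 - (1 + ε)t)) ≤ exp(-ε⁴Δ'/3) ≤ n⁻³³`, and a union bound over
the `η ≤ n` colours and `n` vertices leaves a failure probability of at most `n⁻³¹`.
-/

open MeasureTheory ProbabilityTheory Real Finset

namespace ProbabilityTheory

variable {Ω ι β : Type*}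

lemma exp_mul_indicator_one (A : Set Ω) (t : ℝ) :
    (fun ω ↦ exp (t * A.indicator (fun _ ↦ (1 : ℝ)) ω))
      = fun ω ↦ A.indicator (fun _ ↦ exp t - 1) ω + 1 := by
  funext ω
  by_cases hω : ω ∈ A <;> simp [hω]

variable [MeasurableSpace Ω] {μ : Measure Ω}

lemma iIndepFun.iIndepSet_preimage [MeasurableSpace β] {J : ι → Ω → β}
    (hindep : iIndepFun J μ) (hJ : ∀ i, Measurable (J i)) {B : Set β} (hB : MeasurableSet B) :
    iIndepSet (fun i ↦ J i ⁻¹' B) μ :=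
  (iIndepSet_iff_meas_biInter fun i ↦ hJ i hB).2 fun s ↦
    hindep.measure_inter_preimage_eq_mul s fun _ _ ↦ hB

variable [IsProbabilityMeasure μ]

lemma integrable_exp_mul_indicator_one {A : Set Ω} (hA : MeasurableSet A) (t : ℝ) :
    Integrable (fun ω ↦ exp (t * A.indicator (fun _ ↦ (1 : ℝ)) ω)) μ := by
  rw [exp_mul_indicator_one]
  exact ((integrable_const _).indicator hA).add (integrable_const 1)

lemma mgf_indicator_one {A : Set Ω} (hA : MeasurableSet A) (t : ℝ) :
    mgf (A.indicator fun _ ↦ (1 : ℝ)) μ t = 1 + μ.real A * (exp t - 1) := by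
  rw [mgf, exp_mul_indicator_one, integral_add ((integrable_const _).indicator hA)
    (integrable_const 1), integral_indicator_const _ hA, integral_const, probReal_univ,
    one_smul, smul_eq_mul]
  ring

lemma mgf_indicator_one_le {A : Set Ω} (hA : MeasurableSet A) {p t : ℝ}
    (hp : μ.real A ≤ p) (ht : 0 ≤ t) :
    mgf (A.indicator fun _ ↦ (1 : ℝ)) μ t ≤ exp (p * (exp t - 1)) := by
  have ht' : 0 ≤ exp t - 1 := by linarith [one_le_exp ht]
  rw [mgf_indicator_one hA]
  calc 1 + μ.real A * (exp t - 1) ≤ p * (exp t - 1) + 1 := by nlinarith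
    _ ≤ exp (p * (exp t - 1)) := add_one_le_exp _

open scoped Classical in
theorem iIndepSet.measureReal_card_ge_le_exp {A : ι → Set Ω} (hindep : iIndepSet A μ)
    (hA : ∀ i, MeasurableSet (A i)) (s : Finset ι) {p t : ℝ} (hp : ∀ i ∈ s, μ.real (A i) ≤ p)
    (ht : 0 ≤ t) (a : ℝ) :
    μ.real {ω | a ≤ #{i ∈ s | ω ∈ A i}} ≤ exp (#s * p * (exp t - 1) - t * a) := by
  set X : ι → Ω → ℝ := fun i ↦ (A i).indicator fun _ ↦ 1
  have hX : ∀ i, Measurable (X i) := fun i ↦ measurable_const.indicator (hA i)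
  have hXindep : iIndepFun X μ := hindep.iIndepFun_indicator
  have hcount : ∀ ω, (∑ i ∈ s, X i) ω = #{i ∈ s | ω ∈ A i} := by
    intro ω
    simp [X, Finset.sum_apply, Set.indicator_apply, Finset.sum_boole]
  have hmgf : mgf (∑ i ∈ s, X i) μ t ≤ exp (#s * p * (exp t - 1)) := by
    rw [hXindep.mgf_sum hX]
    calc ∏ i ∈ s, mgf (X i) μ t ≤ ∏ _i ∈ s, exp (p * (exp t - 1)) :=
          prod_le_prod (fun _ _ ↦ mgf_nonneg) fun i hi ↦ mgf_indicator_one_le (hA i) (hp i hi) ht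
      _ = exp (#s * p * (exp t - 1)) := by rw [prod_const, ← exp_nat_mul, mul_assoc]
  have hint : Integrable (fun ω ↦ exp (t * (∑ i ∈ s, X i) ω)) μ :=
    hXindep.integrable_exp_mul_sum hX fun i _ ↦ integrable_exp_mul_indicator_one (hA i) t
  calc μ.real {ω | a ≤ #{i ∈ s | ω ∈ A i}} = μ.real {ω | a ≤ (∑ i ∈ s, X i) ω} := by
        simp only [hcount]
    _ ≤ exp (-t * a) * mgf (∑ i ∈ s, X i) μ t := measure_ge_le_exp_mul_mgf a ht hint
    _ ≤ exp (-t * a) * exp (#s * p * (exp t - 1)) := by gcongr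
    _ = exp (#s * p * (exp t - 1) - t * a) := by rw [← exp_add]; ring_nf

lemma ofReal_one_sub_le_measure_setOf_forall {κ : Type*} [Fintype κ] (s : Finset ι)
    {P : ι → κ → Ω → Prop} {δ : ℝ} (hδ : 0 ≤ δ)
    (h : ∀ i ∈ s, ∀ k, μ {ω | ¬ P i k ω} ≤ ENNReal.ofReal δ) :
    ENNReal.ofReal (1 - #s * Fintype.card κ * δ) ≤ μ {ω | ∀ i ∈ s, ∀ k, P i k ω} := by
  set S := {ω | ∀ i ∈ s, ∀ k, P i k ω}
  have hcompl : μ Sᶜ ≤ ENNReal.ofReal (#s * Fintype.card κ * δ) :=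
    calc μ Sᶜ = μ (⋃ i ∈ s, ⋃ k, {ω | ¬ P i k ω}) := by congr 1; ext; simp [S]
      _ ≤ ∑ i ∈ s, ∑ k, μ {ω | ¬ P i k ω} :=
        (measure_biUnion_finset_le _ _).trans (sum_le_sum fun _ _ ↦ measure_iUnion_fintype_le _ _)
      _ ≤ ∑ _i ∈ s, ∑ _k : κ, ENNReal.ofReal δ := by gcongr with i hi k; exact h i hi k
      _ = ENNReal.ofReal (#s * Fintype.card κ * δ) := by
        simp [ENNReal.ofReal_mul, mul_assoc]
  calc ENNReal.ofReal (1 - #s * Fintype.card κ * δ)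
      = 1 - ENNReal.ofReal (#s * Fintype.card κ * δ) := by
        rw [ENNReal.ofReal_sub _ (by positivity), ENNReal.ofReal_one]
    _ ≤ 1 - μ Sᶜ := tsub_le_tsub_left hcompl 1
    _ ≤ μ S := by
      rw [tsub_le_iff_right, ← measure_univ (μ := μ), ← Set.union_compl_self S]
      exact measure_union_le _ _

end ProbabilityTheory

lemma exp_three_mul_div_four_sub_le {ε : ℝ} (hε0 : 0 < ε) (hε1 : ε ≤ 1) :
    exp (3 * ε / 4) - 1 - (1 + ε) * (3 * ε / 4) ≤ -(ε ^ 4 / 3) := by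
  have h := Real.exp_bound' (x := 3 * ε / 4) (by positivity) (by linarith) (n := 5) (by norm_num)
  simp only [sum_range_succ, sum_range_zero] at h
  norm_num [Nat.factorial] at h
  have h3 : ε ^ 3 ≤ ε ^ 2 := pow_le_pow_of_le_one hε0.le hε1 (by norm_num)
  have h4 : ε ^ 4 ≤ ε ^ 2 := pow_le_pow_of_le_one hε0.le hε1 (by norm_num)
  have h5 : ε ^ 5 ≤ ε ^ 2 := pow_le_pow_of_le_one hε0.le hε1 (by norm_num)
  nlinarith [sq_nonneg ε]

lemma chernoff_exponent_le {ε d Δ' L : ℝ} (hε0 : 0 < ε) (hε1 : ε ≤ 1) (hd : d ≤ Δ')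
    (hL : 0 ≤ L) (hΔ' : Δ' ≥ 100 * L / ε ^ 4) :
    d * (exp (3 * ε / 4) - 1) - 3 * ε / 4 * ((1 + ε) * Δ') ≤ -(33 * L) := by
  have hexp : 0 ≤ exp (3 * ε / 4) - 1 := by linarith [one_le_exp (by positivity : 0 ≤ 3 * ε / 4)]
  have hΔ'L : 100 * L ≤ ε ^ 4 * Δ' := by
    linarith [(div_le_iff₀ (by positivity : (0 : ℝ) < ε ^ 4)).1 hΔ']
  have hΔ'0 : 0 ≤ Δ' := le_of_mul_le_mul_left (by linarith) (by positivity : 0 < ε ^ 4)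
  calc d * (exp (3 * ε / 4) - 1) - 3 * ε / 4 * ((1 + ε) * Δ')
      ≤ Δ' * (exp (3 * ε / 4) - 1 - (1 + ε) * (3 * ε / 4)) := by nlinarith
    _ ≤ Δ' * -(ε ^ 4 / 3) := mul_le_mul_of_nonneg_left (exp_three_mul_div_four_sub_le hε0 hε1) hΔ'0
    _ ≤ -(33 * L) := by nlinarith

lemma one_le_log_natCast {n : ℕ} (hn : 3 ≤ n) : 1 ≤ log n := by
  rw [le_log_iff_exp_le (by positivity)]
  calc exp 1 ≤ 3 := (exp_one_lt_d9.trans (by norm_num)).le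
    _ ≤ n := by exact_mod_cast hn

namespace SimpleGraph

variable {V Ω β : Type*} [Fintype V] [DecidableEq V] (G : SimpleGraph V) [DecidableRel G.Adj]
  [MeasurableSpace Ω] {μ : Measure Ω} [IsProbabilityMeasure μ]
  [MeasurableSpace β] [MeasurableSingletonClass β] {J : Sym2 V → Ω → β}

theorem measureReal_ncard_incidenceSet_ge_le_exp (hJ : ∀ e, Measurable (J e))
    (hindep : iIndepFun (fun e : G.edgeSet ↦ J e) μ) (b : β) {p t : ℝ}
    (hp : ∀ e ∈ G.edgeSet, μ.real {ω | J e ω = b} ≤ p) (ht : 0 ≤ t) (u : V) (a : ℝ) :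
    μ.real {ω | a ≤ {e | e ∈ G.incidenceSet u ∧ J e ω = b}.ncard}
      ≤ exp (G.degree u * p * (exp t - 1) - t * a) := by
  classical
  set s := (G.incidenceFinset u).subtype (· ∈ G.edgeSet)
  have hs : #s = G.degree u := by
    rw [card_subtype, filter_true_of_mem fun e he ↦
      G.incidenceSet_subset u ((G.mem_incidenceFinset u e).1 he), G.card_incidenceFinset_eq_degree]
  have hcount : ∀ ω, {e | e ∈ G.incidenceSet u ∧ J e ω = b}.ncard
      = #(s.filter fun e ↦ ω ∈ J e.1 ⁻¹' {b}) := by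
    intro ω
    rw [← Set.ncard_coe_finset, ← Set.ncard_image_of_injective _ Subtype.val_injective]
    congr 1
    ext e
    simp only [s, coe_filter, Set.mem_image, Set.mem_ofPred_eq, mem_subtype,
      mem_incidenceFinset, Set.mem_preimage, Set.mem_singleton_iff]
    constructor
    · rintro ⟨he, hb⟩; exact ⟨⟨e, G.incidenceSet_subset u he⟩, ⟨he, hb⟩, rfl⟩
    · rintro ⟨e, ⟨he, hb⟩, rfl⟩; exact ⟨he, hb⟩
  have hchernoff := (hindep.iIndepSet_preimage (fun e ↦ hJ e) (measurableSet_singleton b))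
    |>.measureReal_card_ge_le_exp (fun e ↦ hJ e (measurableSet_singleton b)) s
      (fun e _ ↦ hp e e.2) ht a
  simpa only [hcount, hs] using hchernoff

theorem measure_ncard_incidenceSet_gt_le (hJ : ∀ e, Measurable (J e))
    (hindep : iIndepFun (fun e : G.edgeSet ↦ J e) μ) (b : β) {p ε Δ' : ℝ} {n : ℕ}
    (hp : ∀ e ∈ G.edgeSet, μ.real {ω | J e ω = b} ≤ p) (u : V) (hd : G.degree u * p ≤ Δ')
    (hn : 0 < n) (hε0 : 0 < ε) (hε1 : ε ≤ 1) (hΔ' : Δ' ≥ 100 * log n / ε ^ 4) :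
    μ {ω | ¬ ({e | e ∈ G.incidenceSet u ∧ J e ω = b}.ncard : ℝ) ≤ (1 + ε) * Δ'}
      ≤ ENNReal.ofReal ((n : ℝ) ^ 33)⁻¹ :=
  calc _ ≤ μ {ω | (1 + ε) * Δ' ≤ ({e | e ∈ G.incidenceSet u ∧ J e ω = b}.ncard : ℝ)} :=
        measure_mono fun _ hω ↦ (not_le.1 hω).le
    _ = ENNReal.ofReal (μ.real _) := (ofReal_measureReal).symm
    _ ≤ ENNReal.ofReal (exp (-(33 * log n))) := ENNReal.ofReal_le_ofReal <|
        (G.measureReal_ncard_incidenceSet_ge_le_exp hJ hindep b hp (by positivity) u _).trans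
          (exp_le_exp.2 (chernoff_exponent_le hε0 hε1 hd (log_natCast_nonneg n) hΔ'))
    _ = ENNReal.ofReal ((n : ℝ) ^ 33)⁻¹ := by
      rw [exp_neg, show (33 : ℝ) * log n = log (n ^ 33) by rw [log_pow]; norm_num,
        exp_log (by positivity)]

end SimpleGraph

/-- Let `G` be a finite simple graph on `n ≥ 3` vertices with maximum degree at most `Δ`,
`100·ln n ≤ Δ' ≤ Δ ≤ n`, `η := ⌈Δ/Δ'⌉`, and let `(J_e)_{e ∈ E}` be independent random
variables, each uniform on `{1, …, η}`; `G_j` is the spanning subgraph of `G` with edge set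
`{e ∈ E : J_e = j}`. If additionally `0 < ε ≤ 1` and `Δ' ≥ 100·ln(n)/ε⁴`, then with
probability at least `1 − 1/n^{31}`, every `j ∈ {1, …, η}` satisfies `Δ(G_j) ≤ (1 + ε)·Δ'`. -/
theorem stmt_13 {V : Type*} [Fintype V] [DecidableEq V]
    (G : SimpleGraph V) [DecidableRel G.Adj]
    {Ω : Type*} [MeasurableSpace Ω] (μ : Measure Ω) [IsProbabilityMeasure μ]
    (Δ Δ' : ℝ) (n : ℕ) (hn : n = Fintype.card V) (hn3 : 3 ≤ n)
    (hdeg : ∀ u : V, (G.degree u : ℝ) ≤ Δ)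
    (hΔ'1 : 100 * Real.log n ≤ Δ') (hΔ'2 : Δ' ≤ Δ) (hΔn : Δ ≤ (n : ℝ))
    (ε : ℝ) (hε0 : 0 < ε) (hε1 : ε ≤ 1)
    (hΔ'ε : Δ' ≥ 100 * Real.log n / ε ^ 4)
    (η : ℕ) (hη : η = ⌈Δ / Δ'⌉₊)
    (J : Sym2 V → Ω → ℕ)
    (hmeas : ∀ e, Measurable (J e))
    (hindep : iIndepFun
      (fun e : G.edgeSet => J e) μ)
    (hdist : ∀ e ∈ G.edgeSet, ∀ j ∈ Finset.Icc 1 η,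
      μ {ω | J e ω = j} = (η : ENNReal)⁻¹) :
    ENNReal.ofReal (1 - 1 / (n : ℝ) ^ 31) ≤
      μ {ω | ∀ j ∈ Finset.Icc 1 η, ∀ u : V,
        (({e | e ∈ G.incidenceSet u ∧ J e ω = j}.ncard : ℝ)) ≤ (1 + ε) * Δ'} := by
  have hΔ' : 1 ≤ Δ' := by linarith [one_le_log_natCast hn3]
  have hΔη : Δ ≤ η * Δ' := by
    rw [hη, ← div_le_iff₀ (by linarith)]; exact Nat.le_ceil _
  have hη0 : (0 : ℝ) < η := pos_of_mul_pos_left (by linarith) (by linarith : 0 ≤ Δ')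
  have hηn : (η : ℝ) ≤ n := by
    rw [hη]; exact_mod_cast Nat.ceil_le.2 ((div_le_self (by linarith) hΔ').trans hΔn)
  have hbad : ∀ j ∈ Icc 1 η, ∀ u : V, μ {ω | ¬ ({e | e ∈ G.incidenceSet u ∧ J e ω = j}.ncard : ℝ)
      ≤ (1 + ε) * Δ'} ≤ ENNReal.ofReal ((n : ℝ) ^ 33)⁻¹ := fun j hj u ↦
    G.measure_ncard_incidenceSet_gt_le hmeas hindep j (p := (η : ℝ)⁻¹)
      (fun e he ↦ by simp [measureReal_def, hdist e he j hj]) u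
      (by rw [← div_eq_mul_inv, div_le_iff₀ hη0]; linarith [hdeg u]) (by omega) hε0 hε1 hΔ'ε
  have hsmall : (#(Icc 1 η) * Fintype.card V : ℝ) * ((n : ℝ) ^ 33)⁻¹ ≤ 1 / (n : ℝ) ^ 31 := calc
    _ ≤ n ^ 2 * ((n : ℝ) ^ 33)⁻¹ := by
      gcongr
      rw [Nat.card_Icc, ← hn]; push_cast; nlinarith
    _ = 1 / (n : ℝ) ^ 31 := by field_simp
  exact (ENNReal.ofReal_le_ofReal (by linarith)).trans
    (ofReal_one_sub_le_measure_setOf_forall _ (by positivity) hbad)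
end
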